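/- arXiv:2512.01787 — 3 statements merged into one kernel-verified Lean document; each statement's English description precedes it below -/
import Mathlib

section
/- Intertwining relation for k = 2: for any smooth f : Ω → ⊙²ℂ² and j ∈ {0,1}, 𝒟⁽¹⁾(Lⱼ f) = Lⱼ(𝒟⁽²⁾ f), where (𝒟⁽¹⁾g)_A = ∇_A^{0′}g_{0′} + ∇_A^{1′}g_{1′}, (𝒟⁽²⁾f)_{AA′} = ∇_A^{0′}f_{0′A′} + ∇_A^{1′}f_{1′A′}, and L on ℂ²⊗ℂ²-valued functions acts on the primed index: (Lⱼ h)_A = zⱼ^{0′}h_{A0′} + zⱼ^{1′}h_{A1′}. -/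
/-- Partial derivative in direction `μ` for complex-valued functions on `ℝ⁴`. -/
noncomputable def pdC (μ : Fin 4) (f : (Fin 4 → ℝ) → ℂ) (x : Fin 4 → ℝ) : ℂ :=
  fderiv ℝ f x (Pi.single μ 1)

/-- The raised-index operators `∇ₐ^{A′}`:
`∇₀^{0′} = −∂₂−i∂₃`, `∇₀^{1′} = −∂₀−i∂₁`, `∇₁^{0′} = ∂₀−i∂₁`, `∇₁^{1′} = −∂₂+i∂₃`. -/
noncomputable def nab (A A' : Fin 2) (f : (Fin 4 → ℝ) → ℂ) (x : Fin 4 → ℝ) : ℂ :=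
  if A = 0 then
    (if A' = 0 then -pdC 2 f x - Complex.I * pdC 3 f x
     else -pdC 0 f x - Complex.I * pdC 1 f x)
  else
    (if A' = 0 then pdC 0 f x - Complex.I * pdC 1 f x
     else -pdC 2 f x + Complex.I * pdC 3 f x)

/-- The coordinate functions `zₐ^{A′}`:
`z₀^{0′} = −x₂−ix₃`, `z₀^{1′} = −x₀−ix₁`, `z₁^{0′} = x₀−ix₁`, `z₁^{1′} = −x₂+ix₃`. -/
noncomputable def zc (A A' : Fin 2) (x : Fin 4 → ℝ) : ℂ :=
  if A = 0 then
    (if A' = 0 then -(x 2 : ℂ) - (x 3 : ℂ) * Complex.I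
     else -(x 0 : ℂ) - (x 1 : ℂ) * Complex.I)
  else
    (if A' = 0 then (x 0 : ℂ) - (x 1 : ℂ) * Complex.I
     else -(x 2 : ℂ) + (x 3 : ℂ) * Complex.I)

/-- The 1-Cauchy–Fueter operator: `(𝒟⁽¹⁾g)_A = ∇_A^{0′}g_{0′} + ∇_A^{1′}g_{1′}`. -/
noncomputable def D1CF (g : (Fin 4 → ℝ) → Fin 2 → ℂ) (x : Fin 4 → ℝ) (A : Fin 2) : ℂ :=
  nab A 0 (fun y => g y 0) x + nab A 1 (fun y => g y 1) x

/-- The 2-Cauchy–Fueter operator: `(𝒟⁽²⁾f)_{AA′} = ∇_A^{0′}f_{0′A′} + ∇_A^{1′}f_{1′A′}`. -/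
noncomputable def D2CF (f : (Fin 4 → ℝ) → Fin 2 → Fin 2 → ℂ) (x : Fin 4 → ℝ)
    (A A' : Fin 2) : ℂ :=
  nab A 0 (fun y => f y 0 A') x + nab A 1 (fun y => f y 1 A') x

/-- `Lⱼ` on `⊙²ℂ²`-valued functions: `(Lⱼ f)_{A′} = zⱼ^{0′} f_{0′A′} + zⱼ^{1′} f_{1′A′}`. -/
noncomputable def Lsym (j : Fin 2) (f : (Fin 4 → ℝ) → Fin 2 → Fin 2 → ℂ)
    (x : Fin 4 → ℝ) (A' : Fin 2) : ℂ :=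
  zc j 0 x * f x 0 A' + zc j 1 x * f x 1 A'

/-- `Lⱼ` on `ℂ²⊗ℂ²`-valued functions, acting on the primed index:
`(Lⱼ h)_A = zⱼ^{0′}h_{A0′} + zⱼ^{1′}h_{A1′}`. -/
noncomputable def Lten (j : Fin 2) (h : (Fin 4 → ℝ) → Fin 2 → Fin 2 → ℂ)
    (x : Fin 4 → ℝ) (A : Fin 2) : ℂ :=
  zc j 0 x * h x A 0 + zc j 1 x * h x A 1

lemma diff_coord (ν : Fin 4) : Differentiable ℝ (fun y : Fin 4 → ℝ => ((y ν : ℝ) : ℂ)) :=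
  Complex.ofRealCLM.differentiable.comp (ContinuousLinearMap.proj (R := ℝ) (φ := fun _ : Fin 4 => ℝ) ν).differentiable

lemma pdC_coord (μ ν : Fin 4) (x : Fin 4 → ℝ) :
    pdC μ (fun y => ((y ν : ℝ) : ℂ)) x = if ν = μ then 1 else 0 := by
  have h : (fun y : Fin 4 → ℝ => ((y ν : ℝ) : ℂ))
      = ⇑(Complex.ofRealCLM.comp (ContinuousLinearMap.proj (R := ℝ) (φ := fun _ : Fin 4 => ℝ) ν)) := rfl
  rw [pdC, h, ContinuousLinearMap.fderiv]
  simp [Pi.single_apply]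
  split <;> simp

lemma pdC_add {g h : (Fin 4 → ℝ) → ℂ} {x} (hg : DifferentiableAt ℝ g x)
    (hh : DifferentiableAt ℝ h x) (μ : Fin 4) :
    pdC μ (fun y => g y + h y) x = pdC μ g x + pdC μ h x := by
  simp [pdC, fderiv_fun_add hg hh]

lemma pdC_mul {g h : (Fin 4 → ℝ) → ℂ} {x} (hg : DifferentiableAt ℝ g x)
    (hh : DifferentiableAt ℝ h x) (μ : Fin 4) :
    pdC μ (fun y => g y * h y) x = g x * pdC μ h x + h x * pdC μ g x := by
  simp [pdC, fderiv_fun_mul hg hh]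

lemma pdC_neg (g : (Fin 4 → ℝ) → ℂ) (x) (μ : Fin 4) :
    pdC μ (fun y => -g y) x = -pdC μ g x := by
  simp [pdC, fderiv_neg]

lemma pdC_sub {g h : (Fin 4 → ℝ) → ℂ} {x} (hg : DifferentiableAt ℝ g x)
    (hh : DifferentiableAt ℝ h x) (μ : Fin 4) :
    pdC μ (fun y => g y - h y) x = pdC μ g x - pdC μ h x := by
  simp [pdC, fderiv_fun_sub hg hh]

lemma pdC_mul_const {g : (Fin 4 → ℝ) → ℂ} {x} (hg : DifferentiableAt ℝ g x) (c : ℂ) (μ : Fin 4) :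
    pdC μ (fun y => g y * c) x = pdC μ g x * c := by
  rw [pdC, fderiv_mul_const hg]
  simp [pdC]
  ring

lemma diff_zc (j B : Fin 2) : Differentiable ℝ (zc j B) := by
  have hred : ∀ j B : Fin 2, zc j B = fun x =>
      if j = 0 then
        (if B = 0 then -((x 2 : ℝ) : ℂ) - ((x 3 : ℝ) : ℂ) * Complex.I
         else -((x 0 : ℝ) : ℂ) - ((x 1 : ℝ) : ℂ) * Complex.I)
      else
        (if B = 0 then ((x 0 : ℝ) : ℂ) - ((x 1 : ℝ) : ℂ) * Complex.I
         else -((x 2 : ℝ) : ℂ) + ((x 3 : ℝ) : ℂ) * Complex.I) := fun _ _ => rfl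
  fin_cases j <;> fin_cases B <;>
    simp only [hred, Fin.mk_zero, Fin.mk_one, show ((0:Fin 2) = 0) = True by simp,
      show ((1:Fin 2) = 0) = False by simp, if_true, if_false]
  · exact (diff_coord 2).neg.sub ((diff_coord 3).mul_const _)
  · exact (diff_coord 0).neg.sub ((diff_coord 1).mul_const _)
  · exact (diff_coord 0).sub ((diff_coord 1).mul_const _)
  · exact (diff_coord 2).neg.add ((diff_coord 3).mul_const _)

lemma pdC_zc (j B : Fin 2) (μ : Fin 4) (x : Fin 4 → ℝ) :
    pdC μ (zc j B) x =
    if j = 0 then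
      (if B = 0 then -(if (2:Fin 4) = μ then (1:ℂ) else 0) - (if (3:Fin 4) = μ then (1:ℂ) else 0) * Complex.I
       else -(if (0:Fin 4) = μ then (1:ℂ) else 0) - (if (1:Fin 4) = μ then (1:ℂ) else 0) * Complex.I)
    else
      (if B = 0 then (if (0:Fin 4) = μ then (1:ℂ) else 0) - (if (1:Fin 4) = μ then (1:ℂ) else 0) * Complex.I
       else -(if (2:Fin 4) = μ then (1:ℂ) else 0) + (if (3:Fin 4) = μ then (1:ℂ) else 0) * Complex.I) := by
  have e1 : zc 0 0 = fun y : Fin 4 → ℝ => -((y 2 : ℝ) : ℂ) - ((y 3 : ℝ) : ℂ) * Complex.I := by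
    funext y; simp [zc]
  have e2 : zc 0 1 = fun y : Fin 4 → ℝ => -((y 0 : ℝ) : ℂ) - ((y 1 : ℝ) : ℂ) * Complex.I := by
    funext y; simp [zc]
  have e3 : zc 1 0 = fun y : Fin 4 → ℝ => ((y 0 : ℝ) : ℂ) - ((y 1 : ℝ) : ℂ) * Complex.I := by
    funext y; simp [zc]
  have e4 : zc 1 1 = fun y : Fin 4 → ℝ => -((y 2 : ℝ) : ℂ) + ((y 3 : ℝ) : ℂ) * Complex.I := by
    funext y; simp [zc]
  fin_cases j <;> fin_cases B <;> simp only [Fin.mk_zero, Fin.mk_one, e1, e2, e3, e4, Fin.isValue, if_true,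
      show ((1:Fin 2) = 0) = False by simp, if_false, ite_true, ite_false, reduceIte]
  · rw [pdC_sub ((diff_coord 2).fun_neg.differentiableAt) (((diff_coord 3).mul_const _).differentiableAt),
      pdC_neg, pdC_mul_const ((diff_coord 3).differentiableAt), pdC_coord, pdC_coord]
  · rw [pdC_sub ((diff_coord 0).fun_neg.differentiableAt) (((diff_coord 1).mul_const _).differentiableAt),
      pdC_neg, pdC_mul_const ((diff_coord 1).differentiableAt), pdC_coord, pdC_coord]
  · rw [pdC_sub ((diff_coord 0).differentiableAt) (((diff_coord 1).mul_const _).differentiableAt),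
      pdC_mul_const ((diff_coord 1).differentiableAt), pdC_coord, pdC_coord]
  · rw [pdC_add ((diff_coord 2).fun_neg.differentiableAt) (((diff_coord 3).mul_const _).differentiableAt),
      pdC_neg, pdC_mul_const ((diff_coord 3).differentiableAt), pdC_coord, pdC_coord]

lemma pdC_Lsym {g h : (Fin 4 → ℝ) → ℂ} {x} (hg : DifferentiableAt ℝ g x)
    (hh : DifferentiableAt ℝ h x) (j : Fin 2) (μ : Fin 4) :
    pdC μ (fun y => zc j 0 y * g y + zc j 1 y * h y) x
      = pdC μ (zc j 0) x * g x + zc j 0 x * pdC μ g x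
        + (pdC μ (zc j 1) x * h x + zc j 1 x * pdC μ h x) := by
  rw [pdC_add (((diff_zc j 0).differentiableAt).fun_mul hg) (((diff_zc j 1).differentiableAt).fun_mul hh),
    pdC_mul ((diff_zc j 0).differentiableAt) hg, pdC_mul ((diff_zc j 1).differentiableAt) hh]
  ring


/-- Intertwining relation for `k = 2`: `𝒟⁽¹⁾(Lⱼ f) = Lⱼ(𝒟⁽²⁾ f)`. -/
theorem intertwining_k2 (Ω : Set (Fin 4 → ℝ)) (hΩ : IsOpen Ω)
    (f : (Fin 4 → ℝ) → Fin 2 → Fin 2 → ℂ) (hf : ContDiffOn ℝ (⊤ : ℕ∞) f Ω)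
    (hsym : ∀ x ∈ Ω, f x 0 1 = f x 1 0) :
    ∀ x ∈ Ω, ∀ j A : Fin 2,
      D1CF (fun y => Lsym j f y) x A = Lten j (fun y A B => D2CF f y A B) x A := by

  intro x hx j A
  have hdf : DifferentiableAt ℝ f x :=
    ((hf.differentiableOn (by simp)) x hx).differentiableAt (hΩ.mem_nhds hx)
  have hfd : ∀ a b : Fin 2, DifferentiableAt ℝ (fun y => f y a b) x := by
    intro a b
    exact differentiableAt_pi.mp (differentiableAt_pi.mp hdf a) b
  have hes : ∀ μ : Fin 4, pdC μ (fun y => f y 0 1) x = pdC μ (fun y => f y 1 0) x := by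
    intro μ
    unfold pdC
    rw [Filter.EventuallyEq.fderiv_eq
      (Filter.eventuallyEq_of_mem (hΩ.mem_nhds hx) hsym)]
  have hs := hsym x hx
  fin_cases j <;> fin_cases A <;>
    · simp only [D1CF, Lsym, Lten, D2CF, nab, Fin.mk_zero, Fin.mk_one, Fin.isValue,
        show ((0:Fin 2) = 0) = True by simp, show ((1:Fin 2) = 0) = False by simp,
        if_true, if_false]
      simp only [pdC_Lsym (hfd 0 0) (hfd 1 0) _ _, pdC_Lsym (hfd 0 1) (hfd 1 1) _ _]
      simp only [pdC_zc, Fin.isValue, show ((0:Fin 2) = 0) = True by simp,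
        show ((1:Fin 2) = 0) = False by simp, if_true, if_false,
        show ((0:Fin 4) = 0) = True by simp, show ((1:Fin 4) = 1) = True by simp,
        show ((2:Fin 4) = 2) = True by simp, show ((3:Fin 4) = 3) = True by simp,
        show ((0:Fin 4) = 1) = False by simp, show ((0:Fin 4) = 2) = False by simp,
        show ((0:Fin 4) = 3) = False by simp, show ((1:Fin 4) = 0) = False by simp,
        show ((1:Fin 4) = 2) = False by simp, show ((1:Fin 4) = 3) = False by simp,
        show ((2:Fin 4) = 0) = False by simp, show ((2:Fin 4) = 1) = False by simp,
        show ((2:Fin 4) = 3) = False by simp, show ((3:Fin 4) = 0) = False by simp,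
        show ((3:Fin 4) = 1) = False by simp, show ((3:Fin 4) = 2) = False by simp]
      simp only [hes, hs]
      ring_nf
      try simp only [Complex.I_sq]
      try ring_nf
end

section
/- If f = (f₀, f₁) is 1-regular on a domain Ω ⊆ ℝ⁴ (i.e. ∇_A^{0′}f₀ + ∇_A^{1′}f₁ = 0 for A = 0, 1), then the functions L₀(f₀,f₁) = z₀^{0′}f₀ + z₀^{1′}f₁ and L₁(f₀,f₁) = z₁^{0′}f₀ + z₁^{1′}f₁ are harmonic on Ω. -/
namespace LRegAux

noncomputable def cproj (μ : Fin 4) : (Fin 4 → ℝ) →L[ℝ] ℂ :=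
  Complex.ofRealCLM.comp (ContinuousLinearMap.proj μ)

noncomputable def Zlin (j A' : Fin 2) : (Fin 4 → ℝ) →L[ℝ] ℂ :=
  if j = 0 then
    (if A' = 0 then -cproj 2 - Complex.I • cproj 3
     else -cproj 0 - Complex.I • cproj 1)
  else
    (if A' = 0 then cproj 0 - Complex.I • cproj 1
     else -cproj 2 + Complex.I • cproj 3)

lemma zc_eq (j A' : Fin 2) : zc j A' = ⇑(Zlin j A') := by
  funext y
  fin_cases j <;> fin_cases A' <;>
    simp [zc, Zlin, cproj, ContinuousLinearMap.smul_apply, smul_eq_mul] <;> ring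

lemma hasFDerivAt_zc (j A' : Fin 2) (x : Fin 4 → ℝ) :
    HasFDerivAt (zc j A') (Zlin j A') x := by
  rw [zc_eq]; exact (Zlin j A').hasFDerivAt

lemma pdC_congr {f g : (Fin 4 → ℝ) → ℂ} {x : Fin 4 → ℝ} (h : f =ᶠ[nhds x] g) (μ : Fin 4) :
    pdC μ f x = pdC μ g x := by
  unfold pdC; rw [h.fderiv_eq]

lemma pdC_zero_of_eventually {f : (Fin 4 → ℝ) → ℂ} {x : Fin 4 → ℝ}
    (h : ∀ᶠ y in nhds x, f y = 0) (μ : Fin 4) : pdC μ f x = 0 := by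
  have : pdC μ f x = pdC μ (fun _ => (0:ℂ)) x := pdC_congr h μ
  rw [this]; unfold pdC; rw [fderiv_fun_const]; simp

lemma diff_pdC {f : (Fin 4 → ℝ) → ℂ} {x : Fin 4 → ℝ} (hf : ContDiffAt ℝ (⊤ : ℕ∞) f x) (ν : Fin 4) :
    DifferentiableAt ℝ (pdC ν f) x := by
  have h1 : ContDiffAt ℝ 1 (fderiv ℝ f) x := hf.fderiv_right (by exact WithTop.coe_le_coe.mpr le_top)
  exact (h1.differentiableAt one_ne_zero).clm_apply (differentiableAt_const _)

lemma pdC_comm {f : (Fin 4 → ℝ) → ℂ} {x : Fin 4 → ℝ} (hf : ContDiffAt ℝ (⊤ : ℕ∞) f x) (μ ν : Fin 4) :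
    pdC μ (pdC ν f) x = pdC ν (pdC μ f) x := by
  have hsymm : IsSymmSndFDerivAt ℝ f x := (hf.of_le (by exact WithTop.coe_le_coe.mpr le_top)).isSymmSndFDerivAt (n := 2) (by simp)
  have hd : DifferentiableAt ℝ (fderiv ℝ f) x :=
    ((hf.fderiv_right (by exact WithTop.coe_le_coe.mpr le_top) : ContDiffAt ℝ 1 (fderiv ℝ f) x)).differentiableAt one_ne_zero
  unfold pdC
  rw [fderiv_clm_apply hd (differentiableAt_const _),
      fderiv_clm_apply hd (differentiableAt_const _)]
  simp [hsymm.eq (Pi.single μ 1) (Pi.single ν 1)]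

lemma pdC_comb4 (a b c d : ℂ) {g0 g1 g2 g3 : (Fin 4 → ℝ) → ℂ} {x : Fin 4 → ℝ}
    (h0 : DifferentiableAt ℝ g0 x) (h1 : DifferentiableAt ℝ g1 x)
    (h2 : DifferentiableAt ℝ g2 x) (h3 : DifferentiableAt ℝ g3 x) (μ : Fin 4) :
    pdC μ (fun y => a * g0 y + b * g1 y + c * g2 y + d * g3 y) x
      = a * pdC μ g0 x + b * pdC μ g1 x + c * pdC μ g2 x + d * pdC μ g3 x := by
  have H : HasFDerivAt (fun y => a * g0 y + b * g1 y + c * g2 y + d * g3 y)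
      (a • fderiv ℝ g0 x + b • fderiv ℝ g1 x + c • fderiv ℝ g2 x + d • fderiv ℝ g3 x) x :=
    (((h0.hasFDerivAt.const_mul a).add (h1.hasFDerivAt.const_mul b)).add
      (h2.hasFDerivAt.const_mul c)).add (h3.hasFDerivAt.const_mul d)
  simp only [pdC, H.fderiv, ContinuousLinearMap.add_apply, ContinuousLinearMap.smul_apply,
    smul_eq_mul]

lemma pdC_L (j : Fin 2) {g0 g1 : (Fin 4 → ℝ) → ℂ} {x : Fin 4 → ℝ}
    (h0 : DifferentiableAt ℝ g0 x) (h1 : DifferentiableAt ℝ g1 x) (μ : Fin 4) :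
    pdC μ (fun y => zc j 0 y * g0 y + zc j 1 y * g1 y) x
      = Zlin j 0 (Pi.single μ 1) * g0 x + zc j 0 x * pdC μ g0 x
        + (Zlin j 1 (Pi.single μ 1) * g1 x + zc j 1 x * pdC μ g1 x) := by
  have H : HasFDerivAt (fun y => zc j 0 y * g0 y + zc j 1 y * g1 y)
      ((zc j 0 x • fderiv ℝ g0 x + (Zlin j 0).smulRight (g0 x))
        + (zc j 1 x • fderiv ℝ g1 x + (Zlin j 1).smulRight (g1 x))) x :=
    (((hasFDerivAt_zc j 0 x).mul' h0.hasFDerivAt).add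
      ((hasFDerivAt_zc j 1 x).mul' h1.hasFDerivAt))
  simp only [pdC, H.fderiv, ContinuousLinearMap.add_apply, ContinuousLinearMap.smul_apply,
    ContinuousLinearMap.smulRight_apply, smul_eq_mul]
  ring

lemma pdC_2L (j : Fin 2) (a b : ℂ) {g0 g1 g2 g3 : (Fin 4 → ℝ) → ℂ} {x : Fin 4 → ℝ}
    (h0 : DifferentiableAt ℝ g0 x) (h1 : DifferentiableAt ℝ g1 x)
    (h2 : DifferentiableAt ℝ g2 x) (h3 : DifferentiableAt ℝ g3 x) (μ : Fin 4) :
    pdC μ (fun y => a * g0 y + zc j 0 y * g1 y + (b * g2 y + zc j 1 y * g3 y)) x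
      = a * pdC μ g0 x + (Zlin j 0 (Pi.single μ 1) * g1 x + zc j 0 x * pdC μ g1 x)
        + (b * pdC μ g2 x + (Zlin j 1 (Pi.single μ 1) * g3 x + zc j 1 x * pdC μ g3 x)) := by
  have H : HasFDerivAt (fun y => a * g0 y + zc j 0 y * g1 y + (b * g2 y + zc j 1 y * g3 y))
      ((a • fderiv ℝ g0 x + (zc j 0 x • fderiv ℝ g1 x + (Zlin j 0).smulRight (g1 x)))
        + (b • fderiv ℝ g2 x + (zc j 1 x • fderiv ℝ g3 x + (Zlin j 1).smulRight (g3 x)))) x :=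
    ((h0.hasFDerivAt.const_mul a).add ((hasFDerivAt_zc j 0 x).mul' h1.hasFDerivAt)).add
      ((h2.hasFDerivAt.const_mul b).add ((hasFDerivAt_zc j 1 x).mul' h3.hasFDerivAt))
  simp only [pdC, H.fderiv, ContinuousLinearMap.add_apply, ContinuousLinearMap.smul_apply,
    ContinuousLinearMap.smulRight_apply, smul_eq_mul]
  ring

end LRegAux

/-- If `(f₀,f₁)` is 1-regular on `Ω`, then `L₀(f₀,f₁) = z₀^{0′}f₀ + z₀^{1′}f₁` and
`L₁(f₀,f₁) = z₁^{0′}f₀ + z₁^{1′}f₁` are harmonic on `Ω`. -/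
theorem L_of_one_regular_is_harmonic (Ω : Set (Fin 4 → ℝ)) (hΩ : IsOpen Ω)
    (f₀ f₁ : (Fin 4 → ℝ) → ℂ)
    (hf₀ : ContDiffOn ℝ (⊤ : ℕ∞) f₀ Ω) (hf₁ : ContDiffOn ℝ (⊤ : ℕ∞) f₁ Ω)
    (hreg : ∀ x ∈ Ω, ∀ A : Fin 2, nab A 0 f₀ x + nab A 1 f₁ x = 0) :
    ∀ x ∈ Ω, ∀ j : Fin 2,
      (pdC 0 (pdC 0 (fun y => zc j 0 y * f₀ y + zc j 1 y * f₁ y)) x +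
       pdC 1 (pdC 1 (fun y => zc j 0 y * f₀ y + zc j 1 y * f₁ y)) x +
       pdC 2 (pdC 2 (fun y => zc j 0 y * f₀ y + zc j 1 y * f₁ y)) x +
       pdC 3 (pdC 3 (fun y => zc j 0 y * f₀ y + zc j 1 y * f₁ y)) x) = 0 := by
  intro x hx j
  have hmem : Ω ∈ nhds x := hΩ.mem_nhds hx
  have hc0 : ∀ y ∈ Ω, ContDiffAt ℝ (⊤ : ℕ∞) f₀ y := fun y hy => hf₀.contDiffAt (hΩ.mem_nhds hy)
  have hc1 : ∀ y ∈ Ω, ContDiffAt ℝ (⊤ : ℕ∞) f₁ y := fun y hy => hf₁.contDiffAt (hΩ.mem_nhds hy)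
  have hd0 : ∀ y ∈ Ω, DifferentiableAt ℝ f₀ y := fun y hy => (hc0 y hy).differentiableAt (by simp)
  have hd1 : ∀ y ∈ Ω, DifferentiableAt ℝ f₁ y := fun y hy => (hc1 y hy).differentiableAt (by simp)
  have hdp0 : ∀ ν : Fin 4, DifferentiableAt ℝ (pdC ν f₀) x := fun ν => LRegAux.diff_pdC (hc0 x hx) ν
  have hdp1 : ∀ ν : Fin 4, DifferentiableAt ℝ (pdC ν f₁) x := fun ν => LRegAux.diff_pdC (hc1 x hx) ν
  have EQ0 : ∀ μ : Fin 4,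
      (-1:ℂ) * pdC μ (pdC 2 f₀) x + (-Complex.I) * pdC μ (pdC 3 f₀) x
        + (-1:ℂ) * pdC μ (pdC 0 f₁) x + (-Complex.I) * pdC μ (pdC 1 f₁) x = 0 := by
    intro μ
    have hev : ∀ᶠ y in nhds x,
        (fun y => (-1:ℂ) * pdC 2 f₀ y + (-Complex.I) * pdC 3 f₀ y
          + (-1:ℂ) * pdC 0 f₁ y + (-Complex.I) * pdC 1 f₁ y) y = 0 := by
      filter_upwards [hmem] with y hy
      have h := hreg y hy 0
      simp [nab] at h
      linear_combination h
    rw [← LRegAux.pdC_comb4 (-1) (-Complex.I) (-1) (-Complex.I)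
      (hdp0 2) (hdp0 3) (hdp1 0) (hdp1 1) μ]
    exact LRegAux.pdC_zero_of_eventually hev μ
  have EQ1 : ∀ μ : Fin 4,
      (1:ℂ) * pdC μ (pdC 0 f₀) x + (-Complex.I) * pdC μ (pdC 1 f₀) x
        + (-1:ℂ) * pdC μ (pdC 2 f₁) x + (Complex.I) * pdC μ (pdC 3 f₁) x = 0 := by
    intro μ
    have hev : ∀ᶠ y in nhds x,
        (fun y => (1:ℂ) * pdC 0 f₀ y + (-Complex.I) * pdC 1 f₀ y
          + (-1:ℂ) * pdC 2 f₁ y + (Complex.I) * pdC 3 f₁ y) y = 0 := by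
      filter_upwards [hmem] with y hy
      have h := hreg y hy 1
      simp [nab] at h
      linear_combination h
    rw [← LRegAux.pdC_comb4 1 (-Complex.I) (-1) (Complex.I)
      (hdp0 0) (hdp0 1) (hdp1 2) (hdp1 3) μ]
    exact LRegAux.pdC_zero_of_eventually hev μ
  have S0 : ∀ μ ν : Fin 4, pdC μ (pdC ν f₀) x = pdC ν (pdC μ f₀) x :=
    fun μ ν => LRegAux.pdC_comm (hc0 x hx) μ ν
  have S1 : ∀ μ ν : Fin 4, pdC μ (pdC ν f₁) x = pdC ν (pdC μ f₁) x :=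
    fun μ ν => LRegAux.pdC_comm (hc1 x hx) μ ν
  have lap0 : pdC 0 (pdC 0 f₀) x + pdC 1 (pdC 1 f₀) x + pdC 2 (pdC 2 f₀) x
      + pdC 3 (pdC 3 f₀) x = 0 := by
    linear_combination (-1:ℂ) * EQ0 2 + Complex.I * EQ0 3 + EQ1 0 + Complex.I * EQ1 1
      - Complex.I * S0 2 3 + Complex.I * S0 0 1 - S1 2 0 - Complex.I * S1 2 1
      + Complex.I * S1 3 0 - S1 3 1
      + (pdC 1 (pdC 1 f₀) x + pdC 3 (pdC 3 f₀) x + pdC 3 (pdC 1 f₁) x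
        - pdC 1 (pdC 3 f₁) x) * Complex.I_sq
  have lap1 : pdC 0 (pdC 0 f₁) x + pdC 1 (pdC 1 f₁) x + pdC 2 (pdC 2 f₁) x
      + pdC 3 (pdC 3 f₁) x = 0 := by
    linear_combination (-1:ℂ) * EQ0 0 + Complex.I * EQ0 1 - EQ1 2 - Complex.I * EQ1 3
      - Complex.I * S1 0 1 + Complex.I * S1 2 3 + S0 2 0 + Complex.I * S0 3 0
      + Complex.I * S0 1 2 + S0 3 1
      + (pdC 1 (pdC 1 f₁) x + pdC 3 (pdC 3 f₁) x - pdC 3 (pdC 1 f₀) x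
        + pdC 1 (pdC 3 f₀) x) * Complex.I_sq
  have hstep : ∀ μ : Fin 4, pdC μ (pdC μ (fun y => zc j 0 y * f₀ y + zc j 1 y * f₁ y)) x
      = LRegAux.Zlin j 0 (Pi.single μ 1) * pdC μ f₀ x
        + (LRegAux.Zlin j 0 (Pi.single μ 1) * pdC μ f₀ x + zc j 0 x * pdC μ (pdC μ f₀) x)
        + (LRegAux.Zlin j 1 (Pi.single μ 1) * pdC μ f₁ x
          + (LRegAux.Zlin j 1 (Pi.single μ 1) * pdC μ f₁ x + zc j 1 x * pdC μ (pdC μ f₁) x)) := by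
    intro μ
    have hev : pdC μ (fun y => zc j 0 y * f₀ y + zc j 1 y * f₁ y)
        =ᶠ[nhds x] (fun y => LRegAux.Zlin j 0 (Pi.single μ 1) * f₀ y + zc j 0 y * pdC μ f₀ y
          + (LRegAux.Zlin j 1 (Pi.single μ 1) * f₁ y + zc j 1 y * pdC μ f₁ y)) := by
      filter_upwards [hmem] with y hy
      exact LRegAux.pdC_L j (hd0 y hy) (hd1 y hy) μ
    rw [LRegAux.pdC_congr hev μ]
    exact LRegAux.pdC_2L j _ _ (hd0 x hx) (hdp0 μ) (hd1 x hx) (hdp1 μ) μ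
  have hr0 := hreg x hx 0
  have hr1 := hreg x hx 1
  simp [nab] at hr0 hr1
  rw [hstep 0, hstep 1, hstep 2, hstep 3]
  fin_cases j <;>
    simp only [LRegAux.Zlin, LRegAux.cproj, if_pos rfl, if_neg (by decide : (1:Fin 2) ≠ 0),
      ContinuousLinearMap.sub_apply, ContinuousLinearMap.add_apply, ContinuousLinearMap.neg_apply,
      ContinuousLinearMap.smul_apply, ContinuousLinearMap.comp_apply,
      ContinuousLinearMap.proj_apply, Complex.ofRealCLM_apply, Pi.single_apply, smul_eq_mul]
  · simp (config := { decide := true }) [Pi.single_apply]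
    linear_combination (2:ℂ) * hr0 + zc 0 0 x * lap0 + zc 0 1 x * lap1
  · simp (config := { decide := true }) [Pi.single_apply]
    linear_combination (2:ℂ) * hr1 + zc 1 0 x * lap0 + zc 1 1 x * lap1
end

section
/- If F = F₁i + F₂j + F₃k is quaternionic regular (DF = 0) on a domain Ω ⊆ ℝ⁴ with F₁, F₂, F₃ real-valued, then the symmetric tensor f defined by f_{0′0′} = F₂ − iF₃, f_{0′1′} = f_{1′0′} = −iF₁, f_{1′1′} = F₂ + iF₃ is 2-regular: 𝒟⁽²⁾f = 0. -/
noncomputable def pdH (μ : Fin 4) (f : (Fin 4 → ℝ) → Quaternion ℝ) (x : Fin 4 → ℝ) :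
    Quaternion ℝ :=
  fderiv ℝ f x (Pi.single μ 1)

noncomputable def Iq : Quaternion ℝ := ⟨0, 1, 0, 0⟩
noncomputable def Jq : Quaternion ℝ := ⟨0, 0, 1, 0⟩
noncomputable def Kq : Quaternion ℝ := ⟨0, 0, 0, 1⟩

/-- The Cauchy–Fueter operator `D = ∂₀ + i∂₁ + j∂₂ + k∂₃`. -/
noncomputable def CF (f : (Fin 4 → ℝ) → Quaternion ℝ) (x : Fin 4 → ℝ) : Quaternion ℝ :=
  pdH 0 f x + Iq * pdH 1 f x + Jq * pdH 2 f x + Kq * pdH 3 f x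

/-- The symmetric tensor associated to a purely imaginary regular function:
`f_{0′0′} = F₂ − iF₃`, `f_{0′1′} = f_{1′0′} = −iF₁`, `f_{1′1′} = F₂ + iF₃`. -/
noncomputable def symOf (F₁ F₂ F₃ : (Fin 4 → ℝ) → ℝ) (x : Fin 4 → ℝ) :
    Fin 2 → Fin 2 → ℂ :=
  fun A A' =>
    if A = 0 then
      (if A' = 0 then (F₂ x : ℂ) - (F₃ x : ℂ) * Complex.I
       else -(F₁ x : ℂ) * Complex.I)
    else
      (if A' = 0 then -(F₁ x : ℂ) * Complex.I
       else (F₂ x : ℂ) + (F₃ x : ℂ) * Complex.I)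

/-- If `F = F₁i + F₂j + F₃k` is quaternionic regular with real components,
then the associated symmetric tensor is 2-regular. -/
theorem sym_tensor_of_imaginary_regular_is_two_regular (Ω : Set (Fin 4 → ℝ))
    (hΩ : IsOpen Ω) (F₁ F₂ F₃ : (Fin 4 → ℝ) → ℝ)
    (h₁ : ContDiffOn ℝ (⊤ : ℕ∞) F₁ Ω) (h₂ : ContDiffOn ℝ (⊤ : ℕ∞) F₂ Ω) (h₃ : ContDiffOn ℝ (⊤ : ℕ∞) F₃ Ω)
    (hreg : ∀ x ∈ Ω, CF (fun y => (⟨0, F₁ y, F₂ y, F₃ y⟩ : Quaternion ℝ)) x = 0) :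
    ∀ x ∈ Ω, ∀ A A' : Fin 2, D2CF (fun y => symOf F₁ F₂ F₃ y) x A A' = 0 := by
  intro x hx A A'
  have hmem := hΩ.mem_nhds hx
  have hd1 : DifferentiableAt ℝ F₁ x := (h₁.contDiffAt hmem).differentiableAt (by simp)
  have hd2 : DifferentiableAt ℝ F₂ x := (h₂.contDiffAt hmem).differentiableAt (by simp)
  have hd3 : DifferentiableAt ℝ F₃ x := (h₃.contDiffAt hmem).differentiableAt (by simp)
  set a : Fin 4 → ℝ := fun μ => fderiv ℝ F₁ x (Pi.single μ 1) with ha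
  set b : Fin 4 → ℝ := fun μ => fderiv ℝ F₂ x (Pi.single μ 1) with hb
  set c : Fin 4 → ℝ := fun μ => fderiv ℝ F₃ x (Pi.single μ 1) with hc
  -- quaternionic derivative, componentwise
  have hpdH : ∀ μ : Fin 4, pdH μ (fun y => (⟨0, F₁ y, F₂ y, F₃ y⟩ : Quaternion ℝ)) x
      = ⟨0, a μ, b μ, c μ⟩ := by
    intro μ
    have feq : (fun y => (⟨0, F₁ y, F₂ y, F₃ y⟩ : Quaternion ℝ))
        = fun y => F₁ y • Iq + F₂ y • Jq + F₃ y • Kq := by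
      funext y; ext <;> simp [Quaternion.re_smul] <;> simp [Iq, Jq, Kq]
    have h' := ((hd1.hasFDerivAt.smul_const Iq).add (hd2.hasFDerivAt.smul_const Jq)).add
      (hd3.hasFDerivAt.smul_const Kq)
    unfold pdH; rw [feq, (show HasFDerivAt (fun y => F₁ y • Iq + F₂ y • Jq + F₃ y • Kq) _ x from h').fderiv]
    ext <;> simp [Quaternion.re_smul] <;> simp [Iq, Jq, Kq, ha, hb, hc]
  -- the four real regularity equations
  have hq := hreg x hx
  unfold CF at hq; rw [Quaternion.ext_iff] at hq
  simp at hq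
  simp [hpdH, Iq, Jq, Kq, Quaternion.re_zero, Quaternion.imI_zero, Quaternion.imJ_zero, Quaternion.imK_zero] at hq
  obtain ⟨e1, e2, e3, e4⟩ := hq
  have E1 : ((a 1 : ℂ) + b 2 + c 3) = 0 := by
    exact_mod_cast congrArg Complex.ofReal (by linarith : a 1 + b 2 + c 3 = (0 : ℝ))
  have E2 : ((a 0 : ℂ) + c 2 - b 3) = 0 := by
    exact_mod_cast congrArg Complex.ofReal (by linarith : a 0 + c 2 - b 3 = (0 : ℝ))
  have E3 : ((b 0 : ℂ) - c 1 + a 3) = 0 := by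
    exact_mod_cast congrArg Complex.ofReal (by linarith : b 0 - c 1 + a 3 = (0 : ℝ))
  have E4 : ((c 0 : ℂ) + b 1 - a 2) = 0 := by
    exact_mod_cast congrArg Complex.ofReal (by linarith : c 0 + b 1 - a 2 = (0 : ℝ))
  -- complex partial derivatives of linear combinations of the components
  have pdc : ∀ (c₁ c₂ c₃ : ℂ) (μ : Fin 4),
      pdC μ (fun y => (F₁ y : ℂ) * c₁ + (F₂ y : ℂ) * c₂ + (F₃ y : ℂ) * c₃) x
      = (a μ : ℂ) * c₁ + (b μ : ℂ) * c₂ + (c μ : ℂ) * c₃ := by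
    intro c₁ c₂ c₃ μ
    have g1 := (Complex.ofRealCLM.hasFDerivAt.comp x hd1.hasFDerivAt).mul_const c₁
    have g2 := (Complex.ofRealCLM.hasFDerivAt.comp x hd2.hasFDerivAt).mul_const c₂
    have g3 := (Complex.ofRealCLM.hasFDerivAt.comp x hd3.hasFDerivAt).mul_const c₃
    simp only [Function.comp_def, Complex.ofRealCLM_apply] at g1 g2 g3
    have h := (g1.add g2).add g3
    rw [pdC, (show HasFDerivAt (fun y => (F₁ y : ℂ) * c₁ + (F₂ y : ℂ) * c₂ + (F₃ y : ℂ) * c₃) _ x from h).fderiv]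
    simp [ha, hb, hc, smul_eq_mul]
    ring
  have e00 : (fun y => symOf F₁ F₂ F₃ y 0 0)
      = fun y => (F₁ y : ℂ) * 0 + (F₂ y : ℂ) * 1 + (F₃ y : ℂ) * (-Complex.I) := by
    funext y; simp [symOf]; ring
  have e01 : (fun y => symOf F₁ F₂ F₃ y 0 1)
      = fun y => (F₁ y : ℂ) * (-Complex.I) + (F₂ y : ℂ) * 0 + (F₃ y : ℂ) * 0 := by
    funext y; simp [symOf]; try ring
  have e10 : (fun y => symOf F₁ F₂ F₃ y 1 0)
      = fun y => (F₁ y : ℂ) * (-Complex.I) + (F₂ y : ℂ) * 0 + (F₃ y : ℂ) * 0 := by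
    funext y; simp [symOf]; try ring
  have e11 : (fun y => symOf F₁ F₂ F₃ y 1 1)
      = fun y => (F₁ y : ℂ) * 0 + (F₂ y : ℂ) * 1 + (F₃ y : ℂ) * Complex.I := by
    funext y; simp [symOf]; try ring
  have P00 : ∀ μ : Fin 4, pdC μ (fun y => symOf F₁ F₂ F₃ y 0 0) x
      = (b μ : ℂ) - (c μ : ℂ) * Complex.I := by
    intro μ; rw [e00, pdc]; ring
  have P01 : ∀ μ : Fin 4, pdC μ (fun y => symOf F₁ F₂ F₃ y 0 1) x
      = -(a μ : ℂ) * Complex.I := by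
    intro μ; rw [e01, pdc]; ring
  have P10 : ∀ μ : Fin 4, pdC μ (fun y => symOf F₁ F₂ F₃ y 1 0) x
      = -(a μ : ℂ) * Complex.I := by
    intro μ; rw [e10, pdc]; ring
  have P11 : ∀ μ : Fin 4, pdC μ (fun y => symOf F₁ F₂ F₃ y 1 1) x
      = (b μ : ℂ) + (c μ : ℂ) * Complex.I := by
    intro μ; rw [e11, pdc]; ring
  have key00 : D2CF (fun y => symOf F₁ F₂ F₃ y) x 0 0 = 0 := by
    simp only [D2CF, nab, show ((1 : Fin 2) = 0) ↔ False from by simp, show ((0 : Fin 2) = 0) ↔ True from by simp, if_true, if_false]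
    rw [P00 2, P00 3, P10 0, P10 1]
    linear_combination (-1 : ℂ) * E1 + Complex.I * E2 + ((c 3 : ℂ) + (a 1 : ℂ)) * Complex.I_sq
  have key01 : D2CF (fun y => symOf F₁ F₂ F₃ y) x 0 1 = 0 := by
    simp only [D2CF, nab, show ((1 : Fin 2) = 0) ↔ False from by simp, show ((0 : Fin 2) = 0) ↔ True from by simp, if_true, if_false]
    rw [P01 2, P01 3, P11 0, P11 1]
    linear_combination (-1 : ℂ) * E3 - Complex.I * E4 + ((a 3 : ℂ) - (c 1 : ℂ)) * Complex.I_sq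
  have key10 : D2CF (fun y => symOf F₁ F₂ F₃ y) x 1 0 = 0 := by
    simp only [D2CF, nab, show ((1 : Fin 2) = 0) ↔ False from by simp, show ((0 : Fin 2) = 0) ↔ True from by simp, if_true, if_false]
    rw [P00 0, P00 1, P10 2, P10 3]
    linear_combination E3 - Complex.I * E4 + ((c 1 : ℂ) - (a 3 : ℂ)) * Complex.I_sq
  have key11 : D2CF (fun y => symOf F₁ F₂ F₃ y) x 1 1 = 0 := by
    simp only [D2CF, nab, show ((1 : Fin 2) = 0) ↔ False from by simp, show ((0 : Fin 2) = 0) ↔ True from by simp, if_true, if_false]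
    rw [P01 0, P01 1, P11 2, P11 3]
    linear_combination (-1 : ℂ) * E1 - Complex.I * E2 + ((a 1 : ℂ) + (c 3 : ℂ)) * Complex.I_sq
  fin_cases A <;> fin_cases A' <;>
    simp only [Fin.zero_eta, Fin.mk_one] <;>
    first
      | exact key00 | exact key01 | exact key10 | exact key11
end
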